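/- Let Φ be irreducible, α a maximal simple root, and γ a (Δ∖{α})-dominant element of E. Then for any τ ∈ W_{Δ∖{α}} and any simple root δ, ((ω̌_α/m_α) − (ω̌_δ/m_δ), γ) ≤ ((ω̌_α/m_α) − (τω̌_δ/m_δ), γ). -/

import Mathlib

open scoped RealInnerProductSpace Classical
open Finset

/-- A crystallographic reduced root system in a real inner product space. -/
structure IsRootSystem {E : Type*} [NormedAddCommGroup E] [InnerProductSpace ℝ E]
    (Φ : Set E) : Prop where
  finite : Φ.Finite
  nonempty : Φ.Nonempty
  zero_not_mem : (0 : E) ∉ Φ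
  span_eq_top : Submodule.span ℝ Φ = ⊤
  reflection_mem : ∀ α ∈ Φ, ∀ β ∈ Φ, β - (2 * ⟪α, β⟫ / ⟪α, α⟫) • α ∈ Φ
  crystallographic : ∀ α ∈ Φ, ∀ β ∈ Φ, ∃ n : ℤ, 2 * ⟪α, β⟫ / ⟪α, α⟫ = (n : ℝ)
  reduced : ∀ α ∈ Φ, ∀ t : ℝ, t • α ∈ Φ → t = 1 ∨ t = -1

variable {E : Type*} [NormedAddCommGroup E] [InnerProductSpace ℝ E] [FiniteDimensional ℝ E]

/-- The orthogonal reflection in the hyperplane orthogonal to `α`. -/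
noncomputable def sref (α : E) : E ≃ₗᵢ[ℝ] E := Submodule.reflection (ℝ ∙ α)ᗮ

/-- The group generated by the reflections `s_α`, `α ∈ B`. -/
noncomputable def reflSubgroup (B : Set E) : Subgroup (E ≃ₗᵢ[ℝ] E) :=
  Subgroup.closure {w | ∃ α ∈ B, w = sref α}

/-- The Weyl group of `Φ`. -/
noncomputable def WeylGroup (Φ : Set E) : Subgroup (E ≃ₗᵢ[ℝ] E) := reflSubgroup Φ

/-- Connectivity of a set of nodes, two nodes being adjacent when they are not
orthogonal (this is the Dynkin-diagram adjacency for simple roots). -/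
def IsConnectedSet (S : Set E) : Prop :=
  ∀ x ∈ S, ∀ y ∈ S, Relation.ReflTransGen (fun a b => a ∈ S ∧ b ∈ S ∧ ⟪a, b⟫ ≠ 0) x y

/-- The connected component of `x` in `S` for the non-orthogonality adjacency. -/
def component (S : Set E) (x : E) : Set E :=
  {y ∈ S | Relation.ReflTransGen (fun a b => a ∈ S ∧ b ∈ S ∧ ⟪a, b⟫ ≠ 0) x y}

/-!
Write `τ⁻¹ γ = γ - η`. Then `(τ ω̌_δ, γ) = (ω̌_δ, τ⁻¹ γ) = (ω̌_δ, γ) - (ω̌_δ, η)`, and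
`(ω̌_δ, η) ≥ 0` because `η` is a nonnegative combination of simple roots. That `γ - w γ` is
such a combination for every `w ∈ W_{Δ∖{α}}` follows by induction on the length of a word in
simple reflections for `w`: appending `s_b` adds `(2 (γ, b) / (b, b)) • w b`, a nonnegative
multiple of the root `w b`, when `w b` is positive, and otherwise the deletion condition
shortens the word.
-/

section

variable {V : Type*} [NormedAddCommGroup V] [InnerProductSpace ℝ V]

theorem sref_apply (v x : V) : sref v x = x - (2 * ⟪v, x⟫ / ⟪v, v⟫) • v := by
  change (ℝ ∙ v)ᗮ.reflection x = _
  rw [Submodule.reflection_orthogonal_apply, Submodule.reflection_singleton_apply,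
    real_inner_self_eq_norm_sq]
  module

theorem sref_inv (v : V) : (sref v)⁻¹ = sref v := by
  rw [LinearIsometryEquiv.inv_def]
  exact Submodule.reflection_symm

theorem sref_mul_self (v : V) : sref v * sref v = 1 := by
  nth_rw 1 [← sref_inv]
  exact inv_mul_cancel _

theorem mul_sref (u : V ≃ₗᵢ[ℝ] V) (v : V) : u * sref v = sref (u v) * u := by
  ext x
  change u (sref v x) = sref (u v) (u x)
  simp only [sref_apply, map_sub, map_smul, LinearIsometryEquiv.inner_map_map]

theorem inner_nonneg_of_mem_hull {s : Set V} {v x : V} (hv : ∀ y ∈ s, 0 ≤ ⟪v, y⟫)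
    (hx : x ∈ PointedCone.hull ℝ s) : 0 ≤ ⟪v, x⟫ := by
  induction hx using Submodule.span_induction with
  | mem y hy => exact hv y hy
  | zero => simp
  | add y z _ _ hy hz => rw [inner_add_right]; exact add_nonneg hy hz
  | smul c y _ hy => rw [← Nonneg.coe_smul, real_inner_smul_right]; exact mul_nonneg c.2 hy

variable {Δ : Finset V} {cw : V → V}

theorem inner_coweight_nonneg_of_mem_hull
    (hcw : ∀ a ∈ Δ, ∀ b ∈ Δ, ⟪cw a, b⟫ = if a = b then 1 else 0) {a x : V} (ha : a ∈ Δ)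
    (hx : x ∈ PointedCone.hull ℝ (Δ : Set V)) : 0 ≤ ⟪cw a, x⟫ :=
  inner_nonneg_of_mem_hull (fun b hb => by rw [hcw a ha b hb]; split_ifs <;> norm_num) hx

theorem eq_sum_inner_coweight_smul
    (hcw : ∀ a ∈ Δ, ∀ b ∈ Δ, ⟪cw a, b⟫ = if a = b then 1 else 0) {x : V}
    (hx : x ∈ Submodule.span ℝ (Δ : Set V)) : x = ∑ a ∈ Δ, ⟪cw a, x⟫ • a := by
  induction hx using Submodule.span_induction with
  | mem b hb =>
    rw [Finset.sum_congr rfl fun a ha => by rw [hcw a ha b hb, ite_smul, one_smul, zero_smul]]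
    simp [Finset.mem_coe.mp hb]
  | zero => simp
  | add y z _ _ hy hz =>
    simp only [inner_add_right, add_smul, Finset.sum_add_distrib]
    rw [← hy, ← hz]
  | smul c y _ hy =>
    simp only [real_inner_smul_right, mul_smul, ← Finset.smul_sum]
    rw [← hy]

end

/-- `Δ` is a base of the reduced set of roots `Φ`, `cw` its dual family of fundamental coweights. -/
structure IsSimpleSystem {V : Type*} [NormedAddCommGroup V] [InnerProductSpace ℝ V]
    (Φ : Set V) (Δ : Finset V) (cw : V → V) : Prop where
  subset : (Δ : Set V) ⊆ Φ
  sref_mem : ∀ b ∈ Δ, ∀ r ∈ Φ, sref b r ∈ Φ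
  mem_closure_or_neg_mem_closure : ∀ r ∈ Φ,
    r ∈ AddSubmonoid.closure (Δ : Set V) ∨ -r ∈ AddSubmonoid.closure (Δ : Set V)
  inner_coweight : ∀ a ∈ Δ, ∀ b ∈ Δ, ⟪cw a, b⟫ = if a = b then 1 else 0
  eq_one_or_eq_neg_one_of_smul_mem : ∀ r ∈ Φ, ∀ t : ℝ, t • r ∈ Φ → t = 1 ∨ t = -1

namespace IsSimpleSystem

variable {V : Type*} [NormedAddCommGroup V] [InnerProductSpace ℝ V]
  {Φ : Set V} {Δ : Finset V} {cw : V → V} (h : IsSimpleSystem Φ Δ cw)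
include h

theorem inner_coweight_nonneg {a x : V} (ha : a ∈ Δ)
    (hx : x ∈ AddSubmonoid.closure (Δ : Set V)) : 0 ≤ ⟪cw a, x⟫ :=
  inner_coweight_nonneg_of_mem_hull h.inner_coweight ha (Submodule.closure_subset_span hx)

theorem neg_notMem_closure {r : V} (hr : r ∈ Φ) (hpos : r ∈ AddSubmonoid.closure (Δ : Set V)) :
    -r ∉ AddSubmonoid.closure (Δ : Set V) := by
  intro hneg
  have hcoord : ∀ a ∈ Δ, ⟪cw a, r⟫ = 0 := by
    intro a ha
    have hle := h.inner_coweight_nonneg ha hneg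
    rw [inner_neg_right, neg_nonneg] at hle
    exact le_antisymm hle (h.inner_coweight_nonneg ha hpos)
  have hr0 : r = 0 := by
    rw [eq_sum_inner_coweight_smul h.inner_coweight (Submodule.closure_subset_span hpos)]
    exact Finset.sum_eq_zero fun a ha => by rw [hcoord a ha, zero_smul]
  obtain h01 | h01 := h.eq_one_or_eq_neg_one_of_smul_mem r hr 0 (by rwa [zero_smul, ← hr0])
  all_goals norm_num at h01

theorem sref_apply_mem_closure {b r : V} (hb : b ∈ Δ) (hr : r ∈ Φ)
    (hpos : r ∈ AddSubmonoid.closure (Δ : Set V)) (hne : r ≠ b) :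
    sref b r ∈ AddSubmonoid.closure (Δ : Set V) := by
  refine (h.mem_closure_or_neg_mem_closure _ (h.sref_mem b hb r hr)).resolve_right
    fun hneg => hne ?_
  -- `s_b` changes only the `b`-coordinate, so all other coordinates of `r` vanish
  have hcoord : ∀ a ∈ Δ, a ≠ b → ⟪cw a, r⟫ = 0 := by
    intro a ha hab
    have hsame : ⟪cw a, sref b r⟫ = ⟪cw a, r⟫ := by
      rw [sref_apply, inner_sub_right, real_inner_smul_right, h.inner_coweight a ha b hb,
        if_neg hab, mul_zero, sub_zero]
    have hle := h.inner_coweight_nonneg ha hneg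
    rw [inner_neg_right, hsame, neg_nonneg] at hle
    exact le_antisymm hle (h.inner_coweight_nonneg ha hpos)
  have hrb : r = ⟪cw b, r⟫ • b := by
    refine (eq_sum_inner_coweight_smul h.inner_coweight
      (Submodule.closure_subset_span hpos)).trans ?_
    exact Finset.sum_eq_single b (fun a ha hab => by rw [hcoord a ha hab, zero_smul])
      (fun hb' => absurd hb hb')
  obtain h1 | h1 := h.eq_one_or_eq_neg_one_of_smul_mem b (h.subset hb) _ (hrb ▸ hr)
  · rw [hrb, h1, one_smul]
  · linarith [h.inner_coweight_nonneg hb hpos]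

theorem list_prod_apply_mem {l : List (V ≃ₗᵢ[ℝ] V)} (hl : ∀ w ∈ l, ∃ a ∈ Δ, w = sref a) {r : V}
    (hr : r ∈ Φ) : l.prod r ∈ Φ := by
  induction l with
  | nil => exact hr
  | cons w t ih =>
    obtain ⟨a, ha, rfl⟩ := hl w List.mem_cons_self
    exact h.sref_mem a ha _ (ih fun w hw => hl w (List.mem_cons_of_mem _ hw))

theorem exists_sublist_prod_eq_mul_sref {l : List (V ≃ₗᵢ[ℝ] V)}
    (hl : ∀ w ∈ l, ∃ a ∈ Δ, w = sref a) {b : V} (hb : b ∈ Δ)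
    (hneg : -(l.prod b) ∈ AddSubmonoid.closure (Δ : Set V)) :
    ∃ l' : List (V ≃ₗᵢ[ℝ] V), l'.Sublist l ∧ l'.length < l.length ∧
      l'.prod = l.prod * sref b := by
  induction l with
  | nil =>
    exact (h.neg_notMem_closure (h.subset hb) (AddSubmonoid.subset_closure hb) hneg).elim
  | cons w t ih =>
    obtain ⟨a, ha, rfl⟩ := hl w List.mem_cons_self
    have ht : ∀ w ∈ t, ∃ a ∈ Δ, w = sref a := fun w hw => hl w (List.mem_cons_of_mem _ hw)
    have htb : t.prod b ∈ Φ := h.list_prod_apply_mem ht (h.subset hb)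
    obtain hpos | hneg' := h.mem_closure_or_neg_mem_closure _ htb
    · -- `s_a` makes the positive root `t b` negative, which only happens for `t b = a`
      have heq : t.prod b = a := by
        by_contra hne
        exact h.neg_notMem_closure (h.sref_mem a ha _ htb)
          (h.sref_apply_mem_closure ha htb hpos hne) hneg
      refine ⟨t, List.sublist_cons_self _ _, by simp, ?_⟩
      rw [List.prod_cons, mul_assoc, mul_sref, heq, ← mul_assoc, sref_mul_self, one_mul]
    · obtain ⟨l', hsub, hlen, hprod⟩ := ih ht hneg'
      refine ⟨sref a :: l', hsub.cons_cons _, by simpa using hlen, ?_⟩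
      rw [List.prod_cons, List.prod_cons, hprod, mul_assoc]

theorem sub_list_prod_apply_mem_hull {γ : V} {l : List (V ≃ₗᵢ[ℝ] V)}
    (hl : ∀ w ∈ l, ∃ a ∈ Δ, 0 ≤ ⟪γ, a⟫ ∧ w = sref a) :
    γ - l.prod γ ∈ PointedCone.hull ℝ (Δ : Set V) := by
  induction hn : l.length using Nat.strong_induction_on generalizing l with
  | _ n ih =>
  obtain rfl | ⟨t, w, rfl⟩ := List.eq_nil_or_concat' l
  · simp
  obtain ⟨b, hb, hγb, rfl⟩ := hl w (by simp)
  have ht : ∀ w ∈ t, ∃ a ∈ Δ, 0 ≤ ⟪γ, a⟫ ∧ w = sref a := fun w hw => hl w (by simp [hw])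
  have htΔ : ∀ w ∈ t, ∃ a ∈ Δ, w = sref a := fun w hw => by
    obtain ⟨a, ha, -, rfl⟩ := ht w hw
    exact ⟨a, ha, rfl⟩
  have htlen : t.length < n := by simp at hn; omega
  rw [List.prod_append, List.prod_singleton]
  obtain hpos | hneg :=
    h.mem_closure_or_neg_mem_closure _ (h.list_prod_apply_mem htΔ (h.subset hb))
  · have hc : 0 ≤ 2 * ⟪b, γ⟫ / ⟪b, b⟫ := by
      rw [real_inner_comm]
      exact div_nonneg (by linarith) real_inner_self_nonneg
    have hstep : γ - (t.prod * sref b) γ =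
        (γ - t.prod γ) + (⟨_, hc⟩ : {c : ℝ // 0 ≤ c}) • t.prod b := by
      rw [← Nonneg.coe_smul]
      change γ - t.prod (sref b γ) = _
      rw [sref_apply, map_sub, map_smul]
      abel
    rw [hstep]
    exact add_mem (ih _ htlen ht rfl)
      (Submodule.smul_mem _ _ (Submodule.closure_subset_span hpos))
  · obtain ⟨l', hsub, hlen, hprod⟩ := h.exists_sublist_prod_eq_mul_sref htΔ hb hneg
    rw [← hprod]
    exact ih _ (hlen.trans htlen) (fun w hw => ht w (hsub.subset hw)) rfl

theorem sub_apply_mem_hull_of_mem_reflSubgroup {J : Set V} (hJ : J ⊆ Δ) {γ : V}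
    (hγ : ∀ a ∈ J, 0 ≤ ⟪γ, a⟫) {w : V ≃ₗᵢ[ℝ] V} (hw : w ∈ reflSubgroup J) :
    γ - w γ ∈ PointedCone.hull ℝ (Δ : Set V) := by
  set S := {w | ∃ a ∈ J, w = sref a}
  have hS : S⁻¹ ⊆ S := by
    rintro w ⟨a, ha, hwa⟩
    exact ⟨a, ha, by rw [← inv_inv w, hwa, sref_inv]⟩
  rw [reflSubgroup, ← Subgroup.mem_toSubmonoid, Subgroup.closure_toSubmonoid,
    Set.union_eq_left.2 hS] at hw
  obtain ⟨l, hl, rfl⟩ := Submonoid.exists_list_of_mem_closure hw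
  refine h.sub_list_prod_apply_mem_hull fun w hw => ?_
  obtain ⟨a, ha, rfl⟩ := hl w hw
  exact ⟨a, hJ ha, hγ a ha, rfl⟩

end IsSimpleSystem

theorem nabla_dominant_inequality_general
    (Φ : Finset E) (hΦ : IsRootSystem (↑Φ : Set E))
    (Δ : Finset E) (hΔΦ : (↑Δ : Set E) ⊆ (↑Φ : Set E))
    (hbase : ∀ β ∈ Φ, β ∈ AddSubmonoid.closure (↑Δ : Set E) ∨
      -β ∈ AddSubmonoid.closure (↑Δ : Set E))
    (m : E → ℕ)
    (cw : E → E) (hcw : ∀ α ∈ Δ, ∀ β ∈ Δ, ⟪cw α, β⟫ = if α = β then 1 else 0)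
    (α : E)
    (γ : E) (hγdom : ∀ δ ∈ Δ, δ ≠ α → 0 ≤ ⟪γ, δ⟫)
    (τ : E ≃ₗᵢ[ℝ] E) (hτ : τ ∈ reflSubgroup ((↑Δ : Set E) \ {α}))
    (δ : E) (hδ : δ ∈ Δ) :
    ⟪(m α : ℝ)⁻¹ • cw α - (m δ : ℝ)⁻¹ • cw δ, γ⟫ ≤
      ⟪(m α : ℝ)⁻¹ • cw α - (m δ : ℝ)⁻¹ • τ (cw δ), γ⟫ := by
  have hsys : IsSimpleSystem (Φ : Set E) Δ cw :=
    { subset := hΔΦ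
      sref_mem := fun b hb r hr => by
        rw [sref_apply]
        exact hΦ.reflection_mem b (hΔΦ hb) r hr
      mem_closure_or_neg_mem_closure := hbase
      inner_coweight := hcw
      eq_one_or_eq_neg_one_of_smul_mem := hΦ.reduced }
  have hη : γ - τ⁻¹ γ ∈ PointedCone.hull ℝ (Δ : Set E) :=
    hsys.sub_apply_mem_hull_of_mem_reflSubgroup Set.sdiff_subset
      (fun a ha => hγdom a ha.1 ha.2) (inv_mem hτ)
  have hτδ : ⟪τ (cw δ), γ⟫ ≤ ⟪cw δ, γ⟫ := by
    have hle := inner_coweight_nonneg_of_mem_hull hcw hδ hη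
    rwa [inner_sub_right, LinearIsometryEquiv.coe_inv, ← LinearIsometryEquiv.inner_map_eq_flip,
      sub_nonneg] at hle
  simp only [inner_sub_left, real_inner_smul_left]
  gcongr

/-- Let `Φ` be irreducible with base `Δ`, highest root `θ = Σ m_α α` and
fundamental coweights `cw α = ω̌_α`, and let `α` be a maximal simple root
(i.e. `(Δ∖{α}) ∪ {α₀}` is connected, the affine node `α₀` being `-θ`).
If `γ` is `(Δ∖{α})`-dominant and `τ ∈ W_{Δ∖{α}}`, then for any simple root `δ`,
`((ω̌_α/m_α) - (ω̌_δ/m_δ), γ) ≤ ((ω̌_α/m_α) - (τω̌_δ/m_δ), γ)`. -/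
theorem nabla_dominant_inequality
    (Φ : Finset E) (hΦ : IsRootSystem (↑Φ : Set E))
    (Δ : Finset E) (hΔΦ : (↑Δ : Set E) ⊆ (↑Φ : Set E))
    (hbase : ∀ β ∈ Φ, β ∈ AddSubmonoid.closure (↑Δ : Set E) ∨
      -β ∈ AddSubmonoid.closure (↑Δ : Set E))
    (hind : LinearIndependent ℝ (fun x : (Δ : Set E) => (x : E)))
    (hirr : IsConnectedSet (↑Δ : Set E))
    (θ : E) (hθ : θ ∈ Φ) (hhigh : ∀ β ∈ Φ, θ - β ∈ AddSubmonoid.closure (↑Δ : Set E))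
    (m : E → ℕ) (hm : θ = ∑ α ∈ Δ, (m α : ℝ) • α) (hmpos : ∀ α ∈ Δ, 0 < m α)
    (cw : E → E) (hcw : ∀ α ∈ Δ, ∀ β ∈ Δ, ⟪cw α, β⟫ = if α = β then 1 else 0)
    (α : E) (hα : α ∈ Δ)
    (hαmax : IsConnectedSet (((↑Δ : Set E) \ {α}) ∪ {-θ}))
    (γ : E) (hγdom : ∀ δ ∈ Δ, δ ≠ α → 0 ≤ ⟪γ, δ⟫)
    (τ : E ≃ₗᵢ[ℝ] E) (hτ : τ ∈ reflSubgroup ((↑Δ : Set E) \ {α}))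
    (δ : E) (hδ : δ ∈ Δ) :
    ⟪(m α : ℝ)⁻¹ • cw α - (m δ : ℝ)⁻¹ • cw δ, γ⟫ ≤
      ⟪(m α : ℝ)⁻¹ • cw α - (m δ : ℝ)⁻¹ • τ (cw δ), γ⟫ :=
  nabla_dominant_inequality_general Φ hΦ Δ hΔΦ hbase m cw hcw α γ hγdom τ hτ δ hδ
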